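/- For the dynamical error model with the KYP/SPR conditions and the gradient update law θ̇ = −γ φ̂ e_y, if α ≥ 4‖Pb‖²‖θ*‖²/(λ_min(Q) λ_min(Q̄)), then the Lyapunov function V is nonincreasing; consequently all closed-loop signals are bounded: for all t ≥ t₀, ‖θ(t) − θ*‖² ≤ γ V(t₀), e(t)ᵀP e(t) ≤ V(t₀), and φ̃(t)ᵀP̄ φ̃(t) ≤ V(t₀)/α. -/

import Mathlib

/-!
Along solutions, `V̇ = -eᵀQe + 2 (θ*ᵀφ̃)(cᵀe) - α φ̃ᵀQ̄φ̃`: by `Pb = cᵀ` the contribution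
`2 (θ - θ*)ᵀφ̂ e_y` of the parameter error to `d(eᵀPe)/dt` is cancelled exactly by the update law,
and the two Lyapunov equations turn the linear parts into `-eᵀQe` and `-α φ̃ᵀQ̄φ̃`. By
Cauchy–Schwarz and AM–GM the cross term is dominated by `λ_min(Q)|e|² + α λ_min(Q̄)|φ̃|²` as soon
as `α λ_min(Q) λ_min(Q̄) ≥ ‖Pb‖²‖θ*‖²`, so `V̇ ≤ 0`; the three summands of `V` are nonnegative,
hence each is bounded by `V(t₀)`.
-/

open Matrix

section

variable {ι κ : Type*} [Fintype ι]

theorem dotProduct_sq_le_dotProduct_self_mul_dotProduct_self {R : Type*} [CommRing R]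
    [LinearOrder R] [IsStrictOrderedRing R] (v w : ι → R) :
    (v ⬝ᵥ w) ^ 2 ≤ (v ⬝ᵥ v) * (w ⬝ᵥ w) := by
  simpa only [dotProduct, sq] using Finset.sum_mul_sq_le_sq_mul_sq Finset.univ v w

theorem dotProduct_self_nonneg {R : Type*} [Ring R] [LinearOrder R] [IsStrictOrderedRing R]
    (v : ι → R) : 0 ≤ v ⬝ᵥ v :=
  Finset.sum_nonneg fun i _ => mul_self_nonneg (v i)

theorem Matrix.PosDef.dotProduct_mulVec_self_nonneg {P : Matrix ι ι ℝ} (hP : P.PosDef)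
    (x : ι → ℝ) : 0 ≤ x ⬝ᵥ P *ᵥ x := by
  simpa using hP.posSemidef.dotProduct_mulVec_nonneg x

open scoped MatrixOrder in
theorem Matrix.PosDef.exists_pos_mul_dotProduct_self_le [DecidableEq ι] {Q : Matrix ι ι ℝ}
    (hQ : Q.PosDef) : ∃ r > 0, ∀ x : ι → ℝ, r * (x ⬝ᵥ x) ≤ x ⬝ᵥ Q *ᵥ x := by
  cases isEmpty_or_nonempty ι
  · exact ⟨1, one_pos, fun x => by simp [dotProduct]⟩
  obtain ⟨r, hr, hrQ⟩ := (CFC.exists_pos_algebraMap_le_iff hQ.isStrictlyPositive.isSelfAdjoint).2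
    fun x hx => hQ.isStrictlyPositive.spectrum_pos hx
  refine ⟨r, hr, fun x => ?_⟩
  simpa [sub_mulVec, Algebra.algebraMap_eq_smul_one, smul_mulVec, dotProduct_sub, sub_nonneg]
    using (Matrix.le_iff.1 hrQ).dotProduct_mulVec_nonneg x

theorem Matrix.PosDef.pos_of_isGreatest [DecidableEq ι] {Q : Matrix ι ι ℝ} (hQ : Q.PosDef)
    {lam : ℝ} (h : IsGreatest {r : ℝ | ∀ x : ι → ℝ, r * (x ⬝ᵥ x) ≤ x ⬝ᵥ Q *ᵥ x} lam) :
    0 < lam := by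
  obtain ⟨r, hr, hrQ⟩ := hQ.exists_pos_mul_dotProduct_self_le
  exact hr.trans_le (h.2 hrQ)

theorem dotProduct_mulVec_add_eq_neg_of_lyapunov {A P Q : Matrix ι ι ℝ}
    (h : Aᵀ * P + P * A = -Q) (x : ι → ℝ) :
    A *ᵥ x ⬝ᵥ P *ᵥ x + x ⬝ᵥ P *ᵥ (A *ᵥ x) = -(x ⬝ᵥ Q *ᵥ x) := by
  have hA : A *ᵥ x ⬝ᵥ P *ᵥ x = x ⬝ᵥ (Aᵀ * P) *ᵥ x := by
    rw [← mulVec_mulVec, dotProduct_mulVec x Aᵀ, vecMul_transpose]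
  rw [hA, mulVec_mulVec, ← dotProduct_add, ← add_mulVec, h, neg_mulVec, dotProduct_neg]

theorem HasDerivAt.dotProduct {f g : ℝ → ι → ℝ} {f' g' : ι → ℝ} {t : ℝ}
    (hf : HasDerivAt f f' t) (hg : HasDerivAt g g' t) :
    HasDerivAt (fun s => f s ⬝ᵥ g s) (f' ⬝ᵥ g t + f t ⬝ᵥ g') t := by
  simp only [_root_.dotProduct, ← Finset.sum_add_distrib]
  exact HasDerivAt.fun_sum fun i _ => (hasDerivAt_pi.1 hf i).mul (hasDerivAt_pi.1 hg i)

theorem HasDerivAt.mulVec (M : Matrix κ ι ℝ) {f : ℝ → ι → ℝ} {f' : ι → ℝ} {t : ℝ}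
    (hf : HasDerivAt f f' t) : HasDerivAt (fun s => M *ᵥ f s) (M *ᵥ f') t :=
  hasDerivAt_pi.2 fun i =>
    HasDerivAt.fun_sum fun j _ => (hasDerivAt_pi.1 hf j).const_mul (M i j)

theorem HasDerivAt.dotProduct_mulVec_of_lyapunov {A P Q : Matrix ι ι ℝ}
    (h : Aᵀ * P + P * A = -Q) {x : ℝ → ι → ℝ} {w : ι → ℝ} {t : ℝ}
    (hx : HasDerivAt x (A *ᵥ x t + w) t) :
    HasDerivAt (fun s => x s ⬝ᵥ P *ᵥ x s)
      (-(x t ⬝ᵥ Q *ᵥ x t) + (w ⬝ᵥ P *ᵥ x t + x t ⬝ᵥ P *ᵥ w)) t := by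
  refine (hx.dotProduct (hx.mulVec P)).congr_deriv ?_
  rw [← dotProduct_mulVec_add_eq_neg_of_lyapunov h, mulVec_add, add_dotProduct, dotProduct_add]
  ring

theorem hasDerivAt_parameterErrorEnergy_of_gradientLaw {θ : ℝ → ι → ℝ} {θstar v : ι → ℝ}
    {γ y t : ℝ} (hγ : γ ≠ 0)
    (hθ : HasDerivAt θ ((-(γ * y)) • v) t) :
    HasDerivAt (fun s => γ⁻¹ * ((θ s - θstar) ⬝ᵥ (θ s - θstar)))
      (-(2 * y * ((θ t - θstar) ⬝ᵥ v))) t := by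
  have hθ' := hθ.sub_const θstar
  refine ((hθ'.dotProduct hθ').const_mul γ⁻¹).congr_deriv ?_
  rw [smul_dotProduct, dotProduct_smul, dotProduct_comm v, smul_eq_mul]
  field_simp
  ring

theorem antitoneOn_Ici_of_hasDerivAt_nonpos {f f' : ℝ → ℝ} {t₀ : ℝ}
    (hf : ∀ t, t₀ ≤ t → HasDerivAt f (f' t) t) (hf' : ∀ t, t₀ ≤ t → f' t ≤ 0) :
    AntitoneOn f (Set.Ici t₀) := by
  refine antitoneOn_of_hasDerivWithinAt_nonpos (f' := f') (convex_Ici t₀)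
    (fun t ht => (hf t ht).continuousAt.continuousWithinAt) (fun t ht => ?_) fun t ht => ?_
  all_goals rw [interior_Ici] at ht
  exacts [(hf t (le_of_lt ht)).hasDerivWithinAt, hf' t (le_of_lt ht)]

theorem two_mul_dotProduct_mul_dotProduct_le [Fintype κ] {lq lqb α : ℝ} (hlq : 0 ≤ lq)
    (hlqb : 0 ≤ lqb) (hα : 0 ≤ α) (c x : ι → ℝ) (θstar y : κ → ℝ)
    (hcθ : (c ⬝ᵥ c) * (θstar ⬝ᵥ θstar) ≤ α * (lq * lqb)) :
    2 * ((θstar ⬝ᵥ y) * (c ⬝ᵥ x)) ≤ lq * (x ⬝ᵥ x) + α * lqb * (y ⬝ᵥ y) := by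
  have hX := dotProduct_self_nonneg x
  have hY := dotProduct_self_nonneg y
  refine two_mul_le_add_of_sq_le_mul (by positivity) (by positivity) ?_
  calc ((θstar ⬝ᵥ y) * (c ⬝ᵥ x)) ^ 2
      ≤ ((θstar ⬝ᵥ θstar) * (y ⬝ᵥ y)) * ((c ⬝ᵥ c) * (x ⬝ᵥ x)) := by
        rw [mul_pow]
        exact mul_le_mul (dotProduct_sq_le_dotProduct_self_mul_dotProduct_self θstar y)
          (dotProduct_sq_le_dotProduct_self_mul_dotProduct_self c x) (sq_nonneg _)
          (mul_nonneg (dotProduct_self_nonneg θstar) hY)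
    _ = (c ⬝ᵥ c) * (θstar ⬝ᵥ θstar) * ((x ⬝ᵥ x) * (y ⬝ᵥ y)) := by ring
    _ ≤ α * (lq * lqb) * ((x ⬝ᵥ x) * (y ⬝ᵥ y)) := by gcongr
    _ = lq * (x ⬝ᵥ x) * (α * lqb * (y ⬝ᵥ y)) := by ring

variable [Fintype κ]

def lyapunovRate (Q : Matrix ι ι ℝ) (Qbar : Matrix κ κ ℝ) (c : ι → ℝ) (θstar : κ → ℝ) (α : ℝ)
    (x : ι → ℝ) (φ : κ → ℝ) : ℝ :=
  -(x ⬝ᵥ Q *ᵥ x) + 2 * ((θstar ⬝ᵥ φ) * (c ⬝ᵥ x)) - α * (φ ⬝ᵥ Qbar *ᵥ φ)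

theorem lyapunovRate_nonpos {Q : Matrix ι ι ℝ} {Qbar : Matrix κ κ ℝ} {c : ι → ℝ} {θstar : κ → ℝ}
    {α lq lqb : ℝ} (hlq : 0 < lq) (hlqb : 0 < lqb) (hα : 0 ≤ α)
    (hQ : ∀ x : ι → ℝ, lq * (x ⬝ᵥ x) ≤ x ⬝ᵥ Q *ᵥ x)
    (hQbar : ∀ φ : κ → ℝ, lqb * (φ ⬝ᵥ φ) ≤ φ ⬝ᵥ Qbar *ᵥ φ)
    (hαbig : 4 * (c ⬝ᵥ c) * (θstar ⬝ᵥ θstar) / (lq * lqb) ≤ α) (x : ι → ℝ) (φ : κ → ℝ) :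
    lyapunovRate Q Qbar c θstar α x φ ≤ 0 := by
  have hcθ : (c ⬝ᵥ c) * (θstar ⬝ᵥ θstar) ≤ α * (lq * lqb) := by
    rw [div_le_iff₀ (by positivity)] at hαbig
    nlinarith [dotProduct_self_nonneg c, dotProduct_self_nonneg θstar]
  have hcross := two_mul_dotProduct_mul_dotProduct_le hlq.le hlqb.le hα c x θstar φ hcθ
  have hφ := mul_le_mul_of_nonneg_left (hQbar φ) hα
  unfold lyapunovRate
  nlinarith [hQ x]

theorem hasDerivAt_lyapunov_of_errorModel {A P Q : Matrix ι ι ℝ} {Λ Pbar Qbar : Matrix κ κ ℝ}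
    {b c : ι → ℝ} {θstar : κ → ℝ} {γ α t : ℝ} (hγ : γ ≠ 0) (hPsym : P.IsSymm)
    (hLyap : Aᵀ * P + P * A = -Q) (hPb : P *ᵥ b = c) (hLyapBar : Λᵀ * Pbar + Pbar * Λ = -Qbar)
    {e : ℝ → ι → ℝ} {θ φhat φtil : ℝ → κ → ℝ}
    (hde : HasDerivAt e
      (A *ᵥ e t + ((θ t - θstar) ⬝ᵥ φhat t) • b + (θstar ⬝ᵥ φtil t) • b) t)
    (hdφ : HasDerivAt φtil (Λ *ᵥ φtil t) t)
    (hdθ : HasDerivAt θ ((-(γ * (c ⬝ᵥ e t))) • φhat t) t) :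
    HasDerivAt (fun s => γ⁻¹ * ((θ s - θstar) ⬝ᵥ (θ s - θstar)) + e s ⬝ᵥ P *ᵥ e s
        + α * (φtil s ⬝ᵥ Pbar *ᵥ φtil s))
      (lyapunovRate Q Qbar c θstar α (e t) (φtil t)) t := by
  rw [add_assoc, ← add_smul] at hde
  have hφ := HasDerivAt.dotProduct_mulVec_of_lyapunov (w := 0) (P := Pbar) hLyapBar
    (by rwa [add_zero])
  refine (((hasDerivAt_parameterErrorEnergy_of_gradientLaw hγ hdθ).add
    (hde.dotProduct_mulVec_of_lyapunov hLyap)).add (hφ.const_mul α)).congr_deriv ?_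
  have hb : b ⬝ᵥ P *ᵥ e t = c ⬝ᵥ e t := by
    rw [dotProduct_mulVec, ← hPsym.eq, vecMul_transpose, hPb]
  simp only [smul_dotProduct, mulVec_smul, dotProduct_smul, smul_eq_mul, hb, hPb,
    dotProduct_comm (e t) c, zero_dotProduct, mulVec_zero, dotProduct_zero, lyapunovRate]
  ring

end

theorem kyp_lyapunov_nonincreasing_and_bounded_general
    {n N : ℕ} (t₀ γ α : ℝ) (hγ : 0 < γ) (hα : 0 < α)
    (A : Matrix (Fin n) (Fin n) ℝ) (b c : Fin n → ℝ)
    (P Q : Matrix (Fin n) (Fin n) ℝ)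
    (hPsym : P.IsSymm) (hP : P.PosDef) (hQ : Q.PosDef)
    (hLyap : Aᵀ * P + P * A = -Q) (hPb : P.mulVec b = c)
    (Λ Pbar Qbar : Matrix (Fin N) (Fin N) ℝ)
    (hPbar : Pbar.PosDef) (hQbar : Qbar.PosDef)
    (hLyapBar : Λᵀ * Pbar + Pbar * Λ = -Qbar)
    (lamQ lamQbar : ℝ)
    (hlamQ : IsGreatest {r : ℝ | ∀ x : Fin n → ℝ, r * (x ⬝ᵥ x) ≤ x ⬝ᵥ Q.mulVec x} lamQ)
    (hlamQbar : IsGreatest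
      {r : ℝ | ∀ x : Fin N → ℝ, r * (x ⬝ᵥ x) ≤ x ⬝ᵥ Qbar.mulVec x} lamQbar)
    (θstar : Fin N → ℝ)
    (hαbig : 4 * (P.mulVec b ⬝ᵥ P.mulVec b) * (θstar ⬝ᵥ θstar) / (lamQ * lamQbar) ≤ α)
    (e : ℝ → Fin n → ℝ) (θ φhat φtil : ℝ → Fin N → ℝ)
    (ey : ℝ → ℝ) (hey : ∀ t, ey t = c ⬝ᵥ e t)
    (hde : ∀ t, t₀ ≤ t → HasDerivAt e
      (A.mulVec (e t) + ((θ t - θstar) ⬝ᵥ φhat t) • b + (θstar ⬝ᵥ φtil t) • b) t)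
    (hdφ : ∀ t, t₀ ≤ t → HasDerivAt φtil (Λ.mulVec (φtil t)) t)
    (hdθ : ∀ t, t₀ ≤ t → HasDerivAt θ ((-(γ * ey t)) • φhat t) t)
    (V : ℝ → ℝ)
    (hV : ∀ t, V t = γ⁻¹ * ((θ t - θstar) ⬝ᵥ (θ t - θstar))
      + e t ⬝ᵥ P.mulVec (e t) + α * (φtil t ⬝ᵥ Pbar.mulVec (φtil t))) :
    AntitoneOn V (Set.Ici t₀) ∧
    ∀ t, t₀ ≤ t →
      (θ t - θstar) ⬝ᵥ (θ t - θstar) ≤ γ * V t₀ ∧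
      e t ⬝ᵥ P.mulVec (e t) ≤ V t₀ ∧
      φtil t ⬝ᵥ Pbar.mulVec (φtil t) ≤ V t₀ / α := by
  have hlamQ_pos := hQ.pos_of_isGreatest hlamQ
  have hlamQbar_pos := hQbar.pos_of_isGreatest hlamQbar
  rw [hPb] at hαbig
  have hanti : AntitoneOn V (Set.Ici t₀) := by
    rw [show V = _ from funext hV]
    refine antitoneOn_Ici_of_hasDerivAt_nonpos (fun t ht => ?_) fun t _ =>
      lyapunovRate_nonpos hlamQ_pos hlamQbar_pos hα.le hlamQ.1 hlamQbar.1 hαbig (e t) (φtil t)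
    exact hasDerivAt_lyapunov_of_errorModel hγ.ne' hPsym hLyap hPb hLyapBar (hde t ht)
      (hdφ t ht) (by simpa only [hey] using hdθ t ht)
  refine ⟨hanti, fun t ht => ?_⟩
  have hVt : V t ≤ V t₀ := hanti Set.self_mem_Ici ht ht
  have hθ := mul_nonneg (inv_nonneg.2 hγ.le) (dotProduct_self_nonneg (θ t - θstar))
  have he := hP.dotProduct_mulVec_self_nonneg (e t)
  have hφ := mul_nonneg hα.le (hPbar.dotProduct_mulVec_self_nonneg (φtil t))
  rw [hV t] at hVt
  refine ⟨(inv_mul_le_iff₀ hγ).1 (by linarith), by linarith, (le_div_iff₀' hα).2 (by linarith)⟩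

/-- For the dynamical error model with the KYP/SPR conditions and the gradient
update law `θ̇ = -γ φ̂ e_y`, if `α ≥ 4‖Pb‖²‖θ*‖²/(λ_min(Q) λ_min(Q̄))`, then the
Lyapunov function `V` is nonincreasing; consequently all closed-loop signals are
bounded: for all `t ≥ t₀`, `‖θ(t) - θ*‖² ≤ γ V(t₀)`, `e(t)ᵀP e(t) ≤ V(t₀)` and
`φ̃(t)ᵀP̄ φ̃(t) ≤ V(t₀)/α`. -/
theorem kyp_lyapunov_nonincreasing_and_bounded
    {n N : ℕ} (t₀ γ α : ℝ) (hγ : 0 < γ) (hα : 0 < α)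
    (A : Matrix (Fin n) (Fin n) ℝ) (b c : Fin n → ℝ)
    (P Q : Matrix (Fin n) (Fin n) ℝ)
    (hPsym : P.IsSymm) (hP : P.PosDef) (hQsym : Q.IsSymm) (hQ : Q.PosDef)
    (hLyap : Aᵀ * P + P * A = -Q) (hPb : P.mulVec b = c)
    (Λ Pbar Qbar : Matrix (Fin N) (Fin N) ℝ)
    (hPbarSym : Pbar.IsSymm) (hPbar : Pbar.PosDef)
    (hQbarSym : Qbar.IsSymm) (hQbar : Qbar.PosDef)
    (hLyapBar : Λᵀ * Pbar + Pbar * Λ = -Qbar)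
    (lamQ lamQbar : ℝ)
    (hlamQ : IsGreatest {r : ℝ | ∀ x : Fin n → ℝ, r * (x ⬝ᵥ x) ≤ x ⬝ᵥ Q.mulVec x} lamQ)
    (hlamQbar : IsGreatest
      {r : ℝ | ∀ x : Fin N → ℝ, r * (x ⬝ᵥ x) ≤ x ⬝ᵥ Qbar.mulVec x} lamQbar)
    (θstar : Fin N → ℝ)
    (hαbig : 4 * (P.mulVec b ⬝ᵥ P.mulVec b) * (θstar ⬝ᵥ θstar) / (lamQ * lamQbar) ≤ α)
    (e : ℝ → Fin n → ℝ) (θ φhat φtil : ℝ → Fin N → ℝ)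
    (ey : ℝ → ℝ) (hey : ∀ t, ey t = c ⬝ᵥ e t)
    (hde : ∀ t, t₀ ≤ t → HasDerivAt e
      (A.mulVec (e t) + ((θ t - θstar) ⬝ᵥ φhat t) • b + (θstar ⬝ᵥ φtil t) • b) t)
    (hdφ : ∀ t, t₀ ≤ t → HasDerivAt φtil (Λ.mulVec (φtil t)) t)
    (hdθ : ∀ t, t₀ ≤ t → HasDerivAt θ ((-(γ * ey t)) • φhat t) t)
    (V : ℝ → ℝ)
    (hV : ∀ t, V t = γ⁻¹ * ((θ t - θstar) ⬝ᵥ (θ t - θstar))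
      + e t ⬝ᵥ P.mulVec (e t) + α * (φtil t ⬝ᵥ Pbar.mulVec (φtil t))) :
    AntitoneOn V (Set.Ici t₀) ∧
    ∀ t, t₀ ≤ t →
      (θ t - θstar) ⬝ᵥ (θ t - θstar) ≤ γ * V t₀ ∧
      e t ⬝ᵥ P.mulVec (e t) ≤ V t₀ ∧
      φtil t ⬝ᵥ Pbar.mulVec (φtil t) ≤ V t₀ / α :=
  kyp_lyapunov_nonincreasing_and_bounded_general t₀ γ α hγ hα A b c P Q hPsym hP hQ hLyap hPb Λ Pbar
    Qbar hPbar hQbar hLyapBar lamQ lamQbar hlamQ hlamQbar θstar hαbig e θ φhat φtil ey hey hde hdφ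
    hdθ V hV
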